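/- Let W be the n×n antidiagonal matrix with all antidiagonal entries equal to 1 (so W = W^{-1}), and let L be an n×n totally nonnegative matrix. Then the 2n×2n skew-symmetric matrix [[0, LW], [-(LW)ᵀ, 0]] is a totally nonnegative Pfaffian. -/
import Mathlib


open Matrix

/-- The Pfaffian of an `N × N` matrix, via the Laplace-type expansion along the first row.
For odd `N` it is `0`, matching the convention that only even-sized skew-symmetric matrices
have a (possibly nonzero) Pfaffian. -/
noncomputable def pf (R : Type*) [CommRing R] : (N : ℕ) → Matrix (Fin N) (Fin N) R → R
  | 0, _ => 1
  | 1, _ => 0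
  | (N+2), A => ∑ j : Fin (N+1), (-1 : R)^(j:ℕ) * A 0 j.succ *
      pf R N (fun a b => A ((j.succAbove a).succ) ((j.succAbove b).succ))

/-- A skew-symmetric real matrix is a *totally nonnegative Pfaffian* if every even-size
principal submatrix has nonnegative Pfaffian. -/
noncomputable def IsTNNPfaffian {N : ℕ} (A : Matrix (Fin N) (Fin N) ℝ) : Prop :=
  ∀ α : Finset (Fin N), Even α.card →
    0 ≤ pf ℝ α.card (A.submatrix (α.orderEmbOfFin rfl) (α.orderEmbOfFin rfl))

/-- A real matrix is *totally nonnegative* if all its minors are nonnegative. -/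
def IsTotallyNonneg {n m : ℕ} (L : Matrix (Fin n) (Fin m) ℝ) : Prop :=
  ∀ (k : ℕ) (f : Fin k → Fin n) (g : Fin k → Fin m), StrictMono f → StrictMono g →
    0 ≤ (L.submatrix f g).det

/-- The `2n × 2n` skew-symmetric matrix `[[0, V], [-Vᵀ, 0]]` built from an `n × n` matrix. -/
noncomputable def hatMat {n : ℕ} (V : Matrix (Fin n) (Fin n) ℝ) :
    Matrix (Fin (n + n)) (Fin (n + n)) ℝ :=
  (Matrix.fromBlocks 0 V (-Vᵀ) 0).submatrix finSumFinEquiv.symm finSumFinEquiv.symm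

lemma pf_congr {N M : ℕ} (h : N = M) (A : Matrix (Fin N) (Fin N) ℝ) :
    pf ℝ N A = pf ℝ M (A.submatrix (Fin.cast h.symm) (Fin.cast h.symm)) := by
  subst h; rfl

lemma pf_zero : ∀ (N : ℕ), N ≠ 0 → pf ℝ N 0 = 0
  | 0, h => absurd rfl h
  | 1, _ => rfl
  | (s+2), _ => by simp [pf]

lemma finSumFinEquiv_symm_eq {k₁ k₂ : ℕ} (i : Fin (k₁ + k₂)) :
    finSumFinEquiv.symm i =
      if hi : (i : ℕ) < k₁ then Sum.inl ⟨i, hi⟩ else Sum.inr ⟨(i : ℕ) - k₁, by omega⟩ := by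
  split_ifs with hi
  · have : i = Fin.castAdd k₂ ⟨(i : ℕ), hi⟩ := by ext; rfl
    conv_lhs => rw [this, finSumFinEquiv_symm_apply_castAdd]
  · have : i = Fin.natAdd k₁ ⟨(i : ℕ) - k₁, by omega⟩ := by ext; simp; omega
    conv_lhs => rw [this, finSumFinEquiv_symm_apply_natAdd]

noncomputable def blockMat {k₁ k₂ : ℕ} (B : Matrix (Fin k₁) (Fin k₂) ℝ) :
    Matrix (Fin (k₁ + k₂)) (Fin (k₁ + k₂)) ℝ :=
  (Matrix.fromBlocks 0 B (-Bᵀ) 0).submatrix finSumFinEquiv.symm finSumFinEquiv.symm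

lemma blockMat_apply {k₁ k₂ : ℕ} (B : Matrix (Fin k₁) (Fin k₂) ℝ) (i j : Fin (k₁ + k₂)) :
    blockMat B i j =
      if hi : (i : ℕ) < k₁ then
        (if hj : (j : ℕ) < k₁ then 0 else B ⟨i, hi⟩ ⟨(j : ℕ) - k₁, by omega⟩)
      else
        (if hj : (j : ℕ) < k₁ then -(B ⟨j, hj⟩ ⟨(i : ℕ) - k₁, by omega⟩) else 0) := by
  unfold blockMat
  rw [Matrix.submatrix_apply, finSumFinEquiv_symm_eq i, finSumFinEquiv_symm_eq j]
  split_ifs with hi hj hj <;> simp [Matrix.fromBlocks]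

lemma succAbove_succ_val {N : ℕ} (j : Fin (N+1)) (a : Fin N) :
    (((j.succAbove a).succ : Fin (N+2)) : ℕ) = if (a : ℕ) < (j : ℕ) then (a : ℕ) + 1 else (a : ℕ) + 2 := by
  simp only [Fin.succAbove, Fin.lt_iff_val_lt_val, Fin.coe_castSucc]
  split_ifs <;> simp

lemma exp_succ (s : ℕ) : (s+1) * s / 2 = s + s * (s-1) / 2 := by
  have h : (s+1) * s = s * (s-1) + 2 * s := by
    cases s with
    | zero => rfl
    | succ t => simp [Nat.succ_sub_one]; ring
  rw [h, Nat.add_mul_div_left _ _ (by norm_num : 0 < 2)]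
  omega

lemma Beq {k₁ k₂ : ℕ} (B : Matrix (Fin k₁) (Fin k₂) ℝ) {x x' : Fin k₁} {y y' : Fin k₂}
    (hx : (x:ℕ) = (x':ℕ)) (hy : (y:ℕ) = (y':ℕ)) : B x y = B x' y' := by
  congr 1 <;> exact Fin.ext ‹_›

lemma pf_blockMat : ∀ (k₁ : ℕ) (k₂ : ℕ) (B : Matrix (Fin k₁) (Fin k₂) ℝ),
    pf ℝ (k₁ + k₂) (blockMat B) =
      if h : k₁ = k₂ then (-1 : ℝ) ^ (k₁ * (k₁ - 1) / 2) * (B.submatrix id (Fin.cast h)).det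
      else 0 := by
  intro k₁
  induction k₁ with
  | zero =>
    intro k₂ B
    cases k₂ with
    | zero =>
      rw [dif_pos rfl]
      have h1 : (B.submatrix id (Fin.cast rfl)).det = 1 := Matrix.det_isEmpty
      rw [h1]
      norm_num
      rfl
    | succ m =>
      have hB : blockMat B = 0 := by
        ext i j
        rw [blockMat_apply, dif_neg (by omega : ¬ (i:ℕ) < 0)]
        rw [dif_neg (by omega : ¬ (j:ℕ) < 0)]
        rfl
      rw [hB, dif_neg (by omega : (0:ℕ) ≠ m+1), pf_congr (Nat.zero_add (m+1))]
      rw [Matrix.submatrix_zero]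
      exact pf_zero (m+1) (by omega)
  | succ s IH =>
    intro k₂ B
    cases k₂ with
    | zero =>
      have hB : blockMat B = 0 := by
        ext i j
        rw [blockMat_apply, dif_pos (by omega : (i:ℕ) < s+1), dif_pos (by omega : (j:ℕ) < s+1)]
        simp
      rw [hB, dif_neg (by omega : s+1 ≠ 0)]
      exact pf_zero (s+1) (by omega)
    | succ m =>
      have hsz : s+1+(m+1) = (s+m)+2 := by omega
      rw [pf_congr hsz]
      set M' := ((blockMat B).submatrix (Fin.cast hsz.symm) (Fin.cast hsz.symm)) with hM'
      rw [pf]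
      -- entry lemmas
      have hM'app : ∀ x y : Fin (s+m+2), M' x y = blockMat B (Fin.cast hsz.symm x) (Fin.cast hsz.symm y) := by
        intro x y; rfl
      have hterm0 : ∀ j : Fin (s+m+1), (j:ℕ) < s → M' 0 j.succ = 0 := by
        intro j hj
        rw [hM'app, blockMat_apply]
        rw [dif_pos (by simp only [Fin.coe_cast, Fin.val_zero]; omega :
          ((Fin.cast hsz.symm (0 : Fin (s+m+2))):ℕ) < s+1)]
        rw [dif_pos (by simp only [Fin.coe_cast, Fin.val_succ]; omega :
          ((Fin.cast hsz.symm (Fin.succ j)):ℕ) < s+1)]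
      have hentry : ∀ c : Fin (m+1),
          M' 0 (⟨s + (c:ℕ), by omega⟩ : Fin (s+m+1)).succ = B 0 c := by
        intro c
        rw [hM'app, blockMat_apply]
        rw [dif_pos (by simp only [Fin.coe_cast, Fin.val_zero]; omega :
          ((Fin.cast hsz.symm (0 : Fin (s+m+2))):ℕ) < s+1)]
        rw [dif_neg (by simp only [Fin.coe_cast, Fin.val_succ]; omega :
          ¬ ((Fin.cast hsz.symm (Fin.succ (⟨s + (c:ℕ), by omega⟩ : Fin (s+m+1)))):ℕ) < s+1)]
        apply Beq <;> simp only [Fin.coe_cast, Fin.val_succ, Fin.val_zero, Fin.val_mk] <;> omega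
      have hminor : ∀ c : Fin (m+1),
          (fun a b => M' (((⟨s + (c:ℕ), by omega⟩ : Fin (s+m+1)).succAbove a).succ)
              (((⟨s + (c:ℕ), by omega⟩ : Fin (s+m+1)).succAbove b).succ)) =
            blockMat (B.submatrix Fin.succ (Fin.succAbove c)) := by
        intro c
        funext a b
        rw [hM'app, blockMat_apply, blockMat_apply]
        have hva : ∀ x : Fin (s+m),
            ((Fin.cast hsz.symm ((((⟨s + (c:ℕ), by omega⟩ : Fin (s+m+1)).succAbove x)).succ)):ℕ)
              = if (x:ℕ) < s + (c:ℕ) then (x:ℕ)+1 else (x:ℕ)+2 := by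
          intro x
          simp only [Fin.coe_cast, succAbove_succ_val, Fin.val_mk]
        simp only [hva, Matrix.submatrix_apply]
        have hltA : ∀ x : Fin (s+m),
            ((if (x:ℕ) < s + (c:ℕ) then (x:ℕ)+1 else (x:ℕ)+2) < s+1) ↔ (x:ℕ) < s := by
          intro x; split_ifs <;> omega
        by_cases ha : (a:ℕ) < s <;> by_cases hb : (b:ℕ) < s
        · rw [dif_pos ((hltA a).mpr ha), dif_pos ((hltA b).mpr hb), dif_pos ha, dif_pos hb]
        · rw [dif_pos ((hltA a).mpr ha), dif_neg (fun h => hb ((hltA b).mp h)),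
            dif_pos ha, dif_neg hb]
          apply Beq
          · simp only [Fin.val_mk, Fin.val_succ]; split_ifs <;> omega
          · simp only [Fin.val_mk, Fin.succAbove, Fin.lt_iff_val_lt_val, Fin.coe_castSucc, Fin.castSucc_mk, Fin.succ_mk,
              Fin.val_succ]
            split_ifs <;> (simp only [Fin.val_mk]; omega)
        · rw [dif_neg (fun h => ha ((hltA a).mp h)), dif_pos ((hltA b).mpr hb),
            dif_neg ha, dif_pos hb]
          rw [neg_inj]
          apply Beq
          · simp only [Fin.val_mk, Fin.val_succ]; split_ifs <;> omega
          · simp only [Fin.val_mk, Fin.succAbove, Fin.lt_iff_val_lt_val, Fin.coe_castSucc, Fin.castSucc_mk, Fin.succ_mk,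
              Fin.val_succ]
            split_ifs <;> (simp only [Fin.val_mk]; omega)
        · rw [dif_neg (fun h => ha ((hltA a).mp h)), dif_neg (fun h => hb ((hltA b).mp h)),
            dif_neg ha, dif_neg hb]
      rcases eq_or_ne s m with heq | hne
      · -- balanced case
        subst heq
        rw [dif_pos rfl]
        have hc : (Fin.cast (rfl : s+1 = s+1)) = id := Fin.cast_refl _ rfl
        rw [hc, Matrix.submatrix_id_id, Matrix.det_succ_row_zero]
        refine Eq.trans (Fin.sum_univ_add (a := s) (b := s+1)
          (f := fun j => (-1:ℝ)^(j:ℕ) * M' 0 j.succ *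
            pf ℝ (s+s) (fun a b => M' ((j.succAbove a).succ) ((j.succAbove b).succ)))) ?_
        have hz : ∀ i : Fin s, (-1:ℝ)^((Fin.castAdd (s+1) i : Fin (s+(s+1))):ℕ) *
            M' 0 (Fin.castAdd (s+1) i).succ *
            pf ℝ (s+s) (fun a b => M' (((Fin.castAdd (s+1) i).succAbove a).succ)
              (((Fin.castAdd (s+1) i).succAbove b).succ)) = 0 := by
          intro i
          rw [hterm0 (Fin.castAdd (s+1) i) (by simpa using i.isLt)]
          ring
        rw [Finset.sum_congr rfl (fun i _ => hz i), Finset.sum_const_zero, zero_add]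
        rw [Finset.mul_sum]
        refine Finset.sum_congr rfl (fun c _ => ?_)
        have hnat : Fin.natAdd s c = (⟨s + (c:ℕ), by omega⟩ : Fin (s+s+1)) := rfl
        rw [hnat, hentry c, hminor c, IH s (B.submatrix Fin.succ c.succAbove), dif_pos rfl]
        have hc2 : (Fin.cast (rfl : s = s)) = id := Fin.cast_refl _ rfl
        rw [hc2, Matrix.submatrix_id_id]
        have hexp : (s+1)*(s+1-1)/2 = s + s*(s-1)/2 := by
          simpa using exp_succ s
        rw [hexp]
        have hval : ((⟨s + (c:ℕ), by omega⟩ : Fin (s+s+1)) : ℕ) = s + (c:ℕ) := rfl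
        rw [hval, pow_add, pow_add]
        ring
      · -- unbalanced case
        rw [dif_neg (by omega : ¬ s+1 = m+1)]
        apply Finset.sum_eq_zero
        intro j _
        by_cases hj : (j:ℕ) < s
        · rw [hterm0 j hj]; ring
        · set c : Fin (m+1) := ⟨(j:ℕ) - s, by omega⟩ with hcdef
          have hje : j = (⟨s + (c:ℕ), by omega⟩ : Fin (s+m+1)) := by
            apply Fin.ext; simp [hcdef]; omega
          rw [hje, hentry c, hminor c, IH m (B.submatrix Fin.succ c.succAbove),
            dif_neg (by omega : ¬ s = m)]
          ring

noncomputable def antiDiag (k : ℕ) : Matrix (Fin k) (Fin k) ℝ :=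
  Matrix.of fun i j => if (i:ℕ) + (j:ℕ) = k - 1 then (1:ℝ) else 0

lemma exp_succ' (s : ℕ) : (s+1) * s / 2 = s + s * (s-1) / 2 := by
  have h : (s+1) * s = s * (s-1) + 2 * s := by
    cases s with
    | zero => rfl
    | succ t => simp [Nat.succ_sub_one]; ring
  rw [h, Nat.add_mul_div_left _ _ (by norm_num : 0 < 2)]
  omega

lemma det_antiDiag : ∀ k, (antiDiag k).det = (-1:ℝ)^(k*(k-1)/2)
  | 0 => by simp [antiDiag]
  | (k+1) => by
    rw [Matrix.det_succ_row_zero, Finset.sum_eq_single (Fin.last k)]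
    · have h0 : antiDiag (k+1) 0 (Fin.last k) = 1 := by
        simp [antiDiag, Fin.val_last]
      have hsub : ((antiDiag (k+1)).submatrix Fin.succ (Fin.last k).succAbove) = antiDiag k := by
        ext a b
        have hk := a.isLt
        simp only [Matrix.submatrix_apply, Fin.succAbove_last, antiDiag, Matrix.of_apply,
          Fin.val_succ, Fin.coe_castSucc]
        exact if_congr (by omega) rfl rfl
      rw [h0, hsub, det_antiDiag k]
      have hexp : (k+1)*((k+1)-1)/2 = k + k*(k-1)/2 := by
        simpa using exp_succ' k
      rw [hexp, Fin.val_last, pow_add]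
      ring
    · intro j _ hj
      have : antiDiag (k+1) 0 j = 0 := by
        have hjv : (j:ℕ) ≠ k := fun h => hj (Fin.ext (by simpa [Fin.val_last] using h))
        simp [antiDiag, hjv]
      rw [this]; ring
    · intro h; exact absurd (Finset.mem_univ _) h

lemma sub_lt_sub' {x y n : ℕ} (h : x < y) (hx : n ≤ x) : x - n < y - n := by omega

lemma orderEmb_lt_iff {N n : ℕ} (α : Finset (Fin N)) (i : Fin α.card) :
    ((α.orderEmbOfFin rfl i : Fin N) : ℕ) < n ↔
      (i:ℕ) < (α.filter (fun x : Fin N => (x:ℕ) < n)).card := by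
  set e := α.orderEmbOfFin rfl with he
  constructor
  · intro h
    have hsub : (Finset.Iic i).image (fun j => e j) ⊆ α.filter (fun x : Fin N => (x:ℕ) < n) := by
      intro x hx
      obtain ⟨j, hj, rfl⟩ := Finset.mem_image.mp hx
      refine Finset.mem_filter.mpr ⟨Finset.orderEmbOfFin_mem α rfl j, ?_⟩
      have hle : e j ≤ e i := e.monotone (Finset.mem_Iic.mp hj)
      have := Fin.le_iff_val_le_val.mp hle
      omega
    have hcard := Finset.card_le_card hsub
    rw [Finset.card_image_of_injective _ e.injective, Fin.card_Iic] at hcard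
    omega
  · intro h
    by_contra hn
    have hsub : α.filter (fun x : Fin N => (x:ℕ) < n) ⊆ (Finset.Iio i).image (fun j => e j) := by
      intro x hx
      obtain ⟨hxα, hxn⟩ := Finset.mem_filter.mp hx
      obtain ⟨j, hj⟩ : ∃ j, e j = x := by
        have hr : x ∈ Set.range ⇑e := by
          rw [he, Finset.range_orderEmbOfFin]
          exact_mod_cast hxα
        exact hr
      refine Finset.mem_image.mpr ⟨j, Finset.mem_Iio.mpr ?_, hj⟩
      by_contra hji
      have hle : e i ≤ e j := e.monotone (not_lt.mp hji)
      have := Fin.le_iff_val_le_val.mp hle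
      rw [hj] at this
      omega
    have hcard := Finset.card_le_card hsub
    have h2 := Finset.card_image_le (s := Finset.Iio i) (f := fun j => e j)
    rw [Fin.card_Iio] at h2
    omega

/-- Let `W` be the `n × n` antidiagonal matrix with all antidiagonal entries `1`
(so `W = W⁻¹`) and let `L` be an `n × n` totally nonnegative matrix.  Then the `2n × 2n`
skew-symmetric matrix `[[0, LW], [-(LW)ᵀ, 0]]` is a totally nonnegative Pfaffian. -/
theorem tnnPfaffian_antidiag (n : ℕ) (W : Matrix (Fin n) (Fin n) ℝ)
    (hW : W = Matrix.of fun i j : Fin n => if (i : ℕ) + (j : ℕ) = n - 1 then (1 : ℝ) else 0)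
    (L : Matrix (Fin n) (Fin n) ℝ) (hL : IsTotallyNonneg L) :
    IsTNNPfaffian (hatMat (L * W)) := by
  intro α _
  classical
  set V := L * W with hV
  set e := α.orderEmbOfFin rfl with he
  set k₁ := (α.filter (fun x : Fin (n+n) => (x:ℕ) < n)).card with hk₁
  set k₂ := (α.filter (fun x : Fin (n+n) => ¬ (x:ℕ) < n)).card with hk₂
  have hcard : α.card = k₁ + k₂ := by
    rw [hk₁, hk₂]
    exact (Finset.card_filter_add_card_filter_not _).symm
  have hkey : ∀ i : Fin α.card, ((e i : Fin (n+n)) : ℕ) < n ↔ (i:ℕ) < k₁ := by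
    intro i
    rw [hk₁, he]
    exact orderEmb_lt_iff α i
  have hfm : ∀ a : Fin k₁, ((e ⟨(a:ℕ), by omega⟩ : Fin (n+n)) : ℕ) < n := by
    intro a
    exact (hkey ⟨(a:ℕ), by omega⟩).mpr a.isLt
  set f : Fin k₁ → Fin n := fun a => ⟨((e ⟨(a:ℕ), by omega⟩ : Fin (n+n)) : ℕ), hfm a⟩ with hf
  have hgm : ∀ b : Fin k₂, n ≤ ((e ⟨k₁ + (b:ℕ), by omega⟩ : Fin (n+n)) : ℕ) := by
    intro b
    by_contra hlt
    push_neg at hlt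
    have hv := (hkey _).mp hlt
    exact absurd (show k₁ + (b:ℕ) < k₁ from hv) (by omega)
  set g : Fin k₂ → Fin n := fun b => ⟨((e ⟨k₁ + (b:ℕ), by omega⟩ : Fin (n+n)) : ℕ) - n, by
    have h1 := hgm b
    have h2 := (e ⟨k₁ + (b:ℕ), by omega⟩).isLt
    omega⟩ with hg
  rw [pf_congr hcard]
  have hident : (((hatMat V).submatrix ⇑e ⇑e).submatrix (Fin.cast hcard.symm) (Fin.cast hcard.symm))
      = blockMat (V.submatrix f g) := by
    ext i j
    show hatMat V (e (Fin.cast hcard.symm i)) (e (Fin.cast hcard.symm j)) = _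
    have hhat : hatMat V = blockMat V := rfl
    rw [hhat, blockMat_apply, blockMat_apply]
    have hci : ((e (Fin.cast hcard.symm i) : Fin (n+n)) : ℕ) < n ↔ (i:ℕ) < k₁ := by
      simpa using hkey (Fin.cast hcard.symm i)
    have hcj : ((e (Fin.cast hcard.symm j) : Fin (n+n)) : ℕ) < n ↔ (j:ℕ) < k₁ := by
      simpa using hkey (Fin.cast hcard.symm j)
    have hfval : ∀ (x : Fin α.card) (hx : (x:ℕ) < k₁), ((f ⟨(x:ℕ), hx⟩) : ℕ) = ((e x : Fin (n+n)) : ℕ) := by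
      intro x hx
      rfl
    have hgval : ∀ (x : Fin α.card) (hx : ¬ (x:ℕ) < k₁) (hx2 : (x:ℕ) - k₁ < k₂),
        ((g ⟨(x:ℕ) - k₁, hx2⟩) : ℕ) = ((e x : Fin (n+n)) : ℕ) - n := by
      intro x hx hx2
      show ((e ⟨k₁ + ((x:ℕ) - k₁), by omega⟩ : Fin (n+n)) : ℕ) - n = _
      have harg : (⟨k₁ + ((x:ℕ) - k₁), by omega⟩ : Fin α.card) = x := Fin.ext (by simp; omega)
      rw [harg]
    by_cases hi : (i:ℕ) < k₁ <;> by_cases hj : (j:ℕ) < k₁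
    · rw [dif_pos (hci.mpr hi), dif_pos (hcj.mpr hj), dif_pos hi, dif_pos hj]
    · rw [dif_pos (hci.mpr hi), dif_neg (fun h => hj (hcj.mp h)), dif_pos hi, dif_neg hj,
        Matrix.submatrix_apply]
      apply Beq
      · exact (hfval (Fin.cast hcard.symm i) hi).symm
      · exact (hgval (Fin.cast hcard.symm j) hj (by omega)).symm
    · rw [dif_neg (fun h => hi (hci.mp h)), dif_pos (hcj.mpr hj), dif_neg hi, dif_pos hj,
        Matrix.submatrix_apply, neg_inj]
      apply Beq
      · exact (hfval (Fin.cast hcard.symm j) hj).symm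
      · exact (hgval (Fin.cast hcard.symm i) hi (by omega)).symm
    · rw [dif_neg (fun h => hi (hci.mp h)), dif_neg (fun h => hj (hcj.mp h)), dif_neg hi,
        dif_neg hj]
  rw [hident, pf_blockMat k₁ k₂ (V.submatrix f g)]
  by_cases hbal : k₁ = k₂
  · rw [dif_pos hbal]
    obtain ⟨g₂, hg₂⟩ : ∃ g₂ : Fin k₁ → Fin n, g₂ = fun b => g (Fin.cast hbal b) := ⟨_, rfl⟩
    have hsub : ((V.submatrix f g).submatrix id (Fin.cast hbal)) = V.submatrix f g₂ := by
      rw [hg₂]; ext a b; rfl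
    have hfmono : StrictMono f := by
      intro a b hab
      exact e.strictMono (Fin.mk_lt_mk.mpr hab)
    have hg₂mono : StrictMono g₂ := by
      rw [hg₂]
      intro a b hab
      have hab' : (a:ℕ) < (b:ℕ) := hab
      have h2 := e.strictMono
        (show (⟨k₁ + ((Fin.cast hbal a : Fin k₂):ℕ), by omega⟩ : Fin α.card) <
            ⟨k₁ + ((Fin.cast hbal b : Fin k₂):ℕ), by omega⟩ from
          Fin.mk_lt_mk.mpr (by simp only [Fin.coe_cast]; omega))
      have h3 := hgm (Fin.cast hbal a)
      exact Fin.mk_lt_mk.mpr (sub_lt_sub' h2 h3)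
    obtain ⟨g₃, hg₃⟩ : ∃ g₃ : Fin k₁ → Fin n, g₃ = fun b => Fin.rev (g₂ (Fin.rev b)) := ⟨_, rfl⟩
    have hg₃mono : StrictMono g₃ := by
      rw [hg₃]
      intro a b hab
      have h1 : Fin.rev b < Fin.rev a := Fin.rev_lt_rev.mpr hab
      have h2 := hg₂mono h1
      exact Fin.rev_lt_rev.mpr h2
    have hVW : V.submatrix f g₂ = (L.submatrix f g₃) * antiDiag k₁ := by
      ext a b
      show (L * W) (f a) (g₂ b) = _
      rw [Matrix.mul_apply, Matrix.mul_apply]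
      rw [Finset.sum_eq_single (Fin.rev (g₂ b) : Fin n)
        (by
          intro c _ hc
          have hcc : ¬ ((c:ℕ) + ((g₂ b : Fin n):ℕ) = n - 1) := by
            intro hcontra
            apply hc
            apply Fin.ext
            rw [Fin.val_rev]
            omega
          rw [hW]
          simp [hcc])
        (by intro h; exact absurd (Finset.mem_univ _) h)]
      rw [Finset.sum_eq_single (Fin.rev b : Fin k₁)
        (by
          intro c _ hc
          have hcc : ¬ ((c:ℕ) + ((b : Fin k₁):ℕ) = k₁ - 1) := by
            intro hcontra
            apply hc
            apply Fin.ext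
            rw [Fin.val_rev]
            omega
          simp [antiDiag, hcc])
        (by intro h; exact absurd (Finset.mem_univ _) h)]
      have hb := b.isLt
      have hgb := (g₂ b).isLt
      have hcond1 : ((Fin.rev (g₂ b) : Fin n):ℕ) + ((g₂ b : Fin n):ℕ) = n - 1 := by
        rw [Fin.val_rev]; omega
      have hcond2 : ((Fin.rev b : Fin k₁):ℕ) + ((b : Fin k₁):ℕ) = k₁ - 1 := by
        rw [Fin.val_rev]; omega
      rw [hW]
      simp only [Matrix.of_apply, antiDiag, Matrix.submatrix_apply, hcond1, hcond2, if_pos]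
      have hrr : g₃ (Fin.rev b) = Fin.rev (g₂ b) := by
        rw [hg₃]; simp [Fin.rev_rev]
      rw [hrr]
    rw [hsub, hVW, Matrix.det_mul, det_antiDiag]
    have hdet := hL k₁ f g₃ hfmono hg₃mono
    have h1 : ((-1:ℝ) ^ (k₁*(k₁-1)/2)) * ((-1:ℝ) ^ (k₁*(k₁-1)/2)) = 1 := by
      rw [← pow_add]
      exact Even.neg_one_pow ⟨k₁*(k₁-1)/2, rfl⟩
    calc (0:ℝ) ≤ (L.submatrix f g₃).det := hdet
      _ = (L.submatrix f g₃).det * (((-1:ℝ) ^ (k₁*(k₁-1)/2)) * ((-1:ℝ) ^ (k₁*(k₁-1)/2))) := by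
          rw [h1, mul_one]
      _ = (-1:ℝ) ^ (k₁*(k₁-1)/2) * ((L.submatrix f g₃).det * (-1:ℝ) ^ (k₁*(k₁-1)/2)) := by ring
  · rw [dif_neg hbal]
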